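/- arXiv:2109.08210 — 2 statements merged into one kernel-verified Lean document; each statement's English description precedes it below -/
import Mathlib

section
/- Let ℓ, r be integers with 0 ≤ r ≤ ℓ. Then (ℓ − r) · S(ℓ, r) = Σ_{t=1}^{ℓ−r} (−1)^{t+1} · C(ℓ, t+1) · S(ℓ−t, r), where S denotes the Stirling number of the second kind and C the binomial coefficient. -/
/-!
Over any commutative ring, `k! S(n, k)` is the `k`-th forward difference of `x ↦ x ^ n` at `0`.
The binomial theorem gives `∑ₜ (-1)^t C(ℓ, t+1) x^(ℓ-t) = x^(ℓ+1) - x (x-1)^ℓ`; applying `Δ^r`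
at `0` and the Leibniz rule `Δ^(k+1) (x f) (0) = (k+1) Δ^k f (1)` turns this into
`∑ₜ (-1)^t C(ℓ, t+1) S(ℓ-t, r) = S(ℓ+1, r) - S(ℓ, r-1) = r S(ℓ, r)`.
The `t = 0` term is `ℓ S(ℓ, r)` and the terms with `t > ℓ - r` vanish.
-/

/-- Stirling numbers of the second kind: `stirling ℓ k` is the number of partitions of an
`ℓ`-element set into `k` nonempty blocks. -/
def stirling : ℕ → ℕ → ℕ
  | 0, 0 => 1
  | 0, _ + 1 => 0
  | _ + 1, 0 => 0
  | l + 1, k + 1 => (k + 1) * stirling l (k + 1) + stirling l k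

open Finset Function fwdDiff Nat

theorem stirling_eq_stirlingSecond : stirling = stirlingSecond := by
  funext n k
  induction n generalizing k with
  | zero => cases k <;> rfl
  | succ n ih => cases k <;> simp [stirling, stirlingSecond_succ_succ, ih]

section fwdDiff

variable {R : Type*} [CommRing R]

theorem fwdDiff_iter_succ_id_mul (f : R → R) (k : ℕ) (x : R) :
    Δ_[1] ^[k + 1] (fun y ↦ y * f y) x =
      x * Δ_[1] ^[k + 1] f x + (k + 1) * Δ_[1] ^[k] f (x + 1) := by
  induction k generalizing x with
  | zero => simp only [zero_add, iterate_one, iterate_zero_apply, fwdDiff]; push_cast; ring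
  | succ k ih =>
    rw [iterate_succ_apply', funext ih]
    simp only [fwdDiff, iterate_succ_apply']
    push_cast
    ring

theorem fwdDiff_iter_pow_apply_zero (n k : ℕ) :
    Δ_[1] ^[k] (fun x : R ↦ x ^ n) 0 = (k ! * stirlingSecond n k : ℕ) := by
  induction n generalizing k with
  | zero =>
    cases k with
    | zero => simp
    | succ k => rw [fwdDiff_iter_pow_eq_zero_of_lt k.succ_pos]; simp
  | succ n ih =>
    cases k with
    | zero => simp
    | succ k =>
      have hshift : Δ_[1] ^[k] (fun x : R ↦ x ^ n) 1 =
          Δ_[1] ^[k] (fun x : R ↦ x ^ n) 0 + Δ_[1] ^[k + 1] (fun x : R ↦ x ^ n) 0 := by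
        rw [iterate_succ_apply', fwdDiff, zero_add]; ring
      simp_rw [_root_.pow_succ']
      rw [fwdDiff_iter_succ_id_mul, zero_mul, zero_add, zero_add, hshift, ih, ih,
        stirlingSecond_succ_succ, factorial_succ]
      push_cast
      ring

theorem sum_neg_one_pow_mul_choose_succ_mul_pow (x : R) (ℓ : ℕ) :
    ∑ t ∈ range (ℓ + 1), (-1) ^ t * (ℓ.choose (t + 1) : R) * x ^ (ℓ - t) =
      x ^ (ℓ + 1) - x * (x - 1) ^ ℓ := by
  rw [sum_range_succ, choose_succ_self, cast_zero, mul_zero, zero_mul, add_zero,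
    sub_eq_neg_add x, add_pow, mul_sum, sum_range_succ', eq_sub_iff_add_eq]
  simp only [pow_zero, one_mul, choose_zero_right, cast_one, mul_one, Nat.sub_zero]
  rw [← add_assoc, ← sum_add_distrib, sum_eq_zero, zero_add, _root_.pow_succ']
  intro t ht
  rw [show ℓ - t = ℓ - (t + 1) + 1 by grind, pow_succ]
  ring

end fwdDiff

theorem sum_neg_one_pow_mul_choose_succ_mul_stirlingSecond (ℓ r : ℕ) :
    ∑ t ∈ range (ℓ + 1), (-1 : ℤ) ^ t * ℓ.choose (t + 1) * stirlingSecond (ℓ - t) r =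
      r * stirlingSecond ℓ r := by
  cases r with
  | zero =>
    rw [cast_zero, zero_mul]
    refine sum_eq_zero fun t ht ↦ ?_
    obtain rfl | hlt := (mem_range_succ_iff.mp ht).eq_or_lt
    · simp
    · obtain ⟨m, hm⟩ := Nat.exists_eq_add_of_lt hlt
      simp [show ℓ - t = m + 1 by omega]
  | succ k =>
    have hpoly : (fun x : ℤ ↦ x ^ (ℓ + 1)) =
        (fun x ↦ x * (x + -1) ^ ℓ) +
          ∑ t ∈ range (ℓ + 1), ((-1) ^ t * ℓ.choose (t + 1) : ℤ) • fun x ↦ x ^ (ℓ - t) := by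
      funext x
      simp only [Pi.add_apply, Finset.sum_apply, Pi.smul_apply, smul_eq_mul,
        sum_neg_one_pow_mul_choose_succ_mul_pow]
      ring
    have hshift : Δ_[1] ^[k] (fun y : ℤ ↦ (y + -1) ^ ℓ) 1 = (k ! * stirlingSecond ℓ k : ℕ) := by
      rw [fwdDiff_iter_comp_add 1 (fun y : ℤ ↦ y ^ ℓ), add_neg_cancel, fwdDiff_iter_pow_apply_zero]
    have hsum : ∑ t ∈ range (ℓ + 1), (-1 : ℤ) ^ t * ℓ.choose (t + 1) *
          ((k + 1)! * stirlingSecond (ℓ - t) (k + 1) : ℕ) =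
        (k + 1)! * ∑ t ∈ range (ℓ + 1), (-1 : ℤ) ^ t * ℓ.choose (t + 1) *
          stirlingSecond (ℓ - t) (k + 1) := by
      rw [mul_sum]
      refine sum_congr rfl fun t _ ↦ ?_
      push_cast
      ring
    have h := congrFun (congrArg (Δ_[1] ^[k + 1]) hpoly) 0
    simp only [fwdDiff_iter_add, Pi.add_apply, fwdDiff_iter_finsetSum, Finset.sum_apply,
      fwdDiff_iter_const_smul, Pi.smul_apply, smul_eq_mul, fwdDiff_iter_succ_id_mul, zero_mul,
      zero_add, fwdDiff_iter_pow_apply_zero, hshift, hsum, stirlingSecond_succ_succ] at h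
    apply mul_left_cancel₀ (by positivity : ((k + 1)! : ℤ) ≠ 0)
    rw [factorial_succ] at h ⊢
    push_cast at h ⊢
    linear_combination -h

theorem stmt_3 (ℓ r : ℕ) (h : r ≤ ℓ) :
    ((ℓ - r : ℕ) : ℤ) * stirling ℓ r =
      ∑ t ∈ Finset.Icc 1 (ℓ - r),
        (-1 : ℤ) ^ (t + 1) * (Nat.choose ℓ (t + 1) : ℤ) * (stirling (ℓ - t) r : ℤ) := by
  rw [stirling_eq_stirlingSecond]
  have hmain := sum_neg_one_pow_mul_choose_succ_mul_stirlingSecond ℓ r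
  rw [← sum_subset (range_subset_range.mpr (by omega : ℓ - r + 1 ≤ ℓ + 1)) fun t _ ht ↦ by
      rw [stirlingSecond_eq_zero_of_lt (by grind), cast_zero, mul_zero]] at hmain
  rw [range_eq_Ico, sum_eq_sum_Ico_succ_bot (by omega), Finset.Ico_add_one_right_eq_Icc] at hmain
  simp only [pow_zero, one_mul, choose_one_right, Nat.sub_zero, zero_add] at hmain
  simp only [pow_succ, mul_neg_one, neg_mul, sum_neg_distrib, cast_sub h]
  linarith
end

section
/- There is a bijection between the set of saturated covers on the grid [m] × [n] and the set of pairs of compatible codes on [m] × [n], given by assigning to a saturated cover S its horizontal code a = (a_1,...,a_m) and vertical code b = (b_1,...,b_n), where a_i is the number of horizontal edges of S in column i and b_j is the number of vertical edges of S in row j. -/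
/-- A saturated cover on the grid `[m] × [n] = {0,…,m} × {0,…,n}`.
`H i j = true` means the horizontal edge `(i,j) → (i+1,j)` is present (valid for `i < m`, `j ≤ n`);
`V i j = true` means the vertical edge `(i,j) → (i,j+1)` is present (valid for `i ≤ m`, `j < n`). -/
structure SatCover (m n : ℕ) where
  H : ℕ → ℕ → Bool
  V : ℕ → ℕ → Bool
  H_bound : ∀ i j, H i j = true → i < m ∧ j ≤ n
  V_bound : ∀ i j, V i j = true → i ≤ m ∧ j < n
  H_down : ∀ i j k, k < j → H i j = true → H i k = true
  V_left : ∀ i j k, k < i → V i j = true → V k j = true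
  sq₁ : ∀ i j, H i j = true → H i (j+1) = true → V i j = true → V (i+1) j = true
  sq₂ : ∀ i j, H i j = true → H i (j+1) = true → V (i+1) j = true → V i j = true
  sq₃ : ∀ i j, H i j = true → V i j = true → V (i+1) j = true → H i (j+1) = true
  sq₄ : ∀ i j, H i (j+1) = true → V i j = true → V (i+1) j = true → H i j = true

/-- `satCount m n` is the number of saturated covers on `[m] × [n]`. -/
noncomputable def satCount (m n : ℕ) : ℕ := Nat.card (SatCover m n)

/-- The horizontal code: `hcode m n S i` is the number of horizontal edges of `S` in column `i`
(for `1 ≤ i ≤ m`). -/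
def hcode (m n : ℕ) (S : SatCover m n) (i : ℕ) : ℕ :=
  ((Finset.range (n + 1)).filter (fun j => S.H (i - 1) j = true)).card

/-- The vertical code: `vcode m n S j` is the number of vertical edges of `S` in row `j`
(for `1 ≤ j ≤ n`). -/
def vcode (m n : ℕ) (S : SatCover m n) (j : ℕ) : ℕ :=
  ((Finset.range (m + 1)).filter (fun k => S.V k (j - 1) = true)).card

/-- A pair of compatible codes on `[m] × [n]`: tuples `(a_1,…,a_m)`, `(b_1,…,b_n)` with
`0 ≤ a_i ≤ n+1`, `0 ≤ b_j ≤ m+1`, `b_{a_i} ≤ i` and `a_{b_j} ≤ j` whenever defined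
(functions are normalized to be `0` outside the index range). -/
structure CompCodes (m n : ℕ) where
  a : ℕ → ℕ
  b : ℕ → ℕ
  a_supp : ∀ i, (i = 0 ∨ m < i) → a i = 0
  b_supp : ∀ j, (j = 0 ∨ n < j) → b j = 0
  a_le : ∀ i, 1 ≤ i → i ≤ m → a i ≤ n + 1
  b_le : ∀ j, 1 ≤ j → j ≤ n → b j ≤ m + 1
  compat_a : ∀ i, 1 ≤ i → i ≤ m → 1 ≤ a i → a i ≤ n → b (a i) ≤ i
  compat_b : ∀ j, 1 ≤ j → j ≤ n → 1 ≤ b j → b j ≤ m → a (b j) ≤ j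

/-!
By (1) and (2), the horizontal edges of a saturated cover in column `i` form the initial segment
`{0, …, a_i - 1}` and its vertical edges in row `j` the initial segment `{0, …, b_j - 1}`, so a cover
is determined by its codes and the codes can be arbitrary up to the saturation condition (3).
For such staircases two of the four square rules hold automatically; the other two, applied at the
top of column `i` and at the end of row `j`, say precisely that `b_{a_i} ≤ i` and `a_{b_j} ≤ j`.
-/

open Finset

theorem Nat.lt_card_filter_range_iff {p : ℕ → Prop} [DecidablePred p] (hp : Antitone p)
    (N j : ℕ) : j < #{k ∈ range N | p k} ↔ j < N ∧ p j := by
  induction N with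
  | zero => simp
  | succ N ih =>
    rw [range_add_one, filter_insert]
    by_cases hN : p N
    · have hall : #{k ∈ range N | p k} = N := by
        rw [filter_true_of_mem fun k hk => hp (mem_range.1 hk).le hN, card_range]
      rw [if_pos hN, card_insert_of_notMem (by simp), hall]
      exact ⟨fun hj => ⟨hj, hp (Nat.lt_succ_iff.1 hj) hN⟩, And.left⟩
    · rw [if_neg hN, ih]
      constructor
      · exact fun ⟨hj, hpj⟩ => ⟨hj.trans (Nat.lt_succ_self N), hpj⟩
      · rintro ⟨hj, hpj⟩
        exact ⟨lt_of_le_of_ne (Nat.lt_succ_iff.1 hj) (by rintro rfl; exact hN hpj), hpj⟩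

namespace SatCover

variable {m n : ℕ}

@[ext]
theorem ext {S T : SatCover m n} (hH : ∀ i j, S.H i j = T.H i j)
    (hV : ∀ i j, S.V i j = T.V i j) : S = T := by
  cases S; cases T; simp only [mk.injEq]; exact ⟨funext₂ hH, funext₂ hV⟩

variable (S : SatCover m n)

theorem antitone_H (i : ℕ) : Antitone fun j => S.H i j = true :=
  fun _ _ hkj h => (lt_or_eq_of_le hkj).elim (S.H_down i _ _ · h) (· ▸ h)

theorem antitone_V (j : ℕ) : Antitone fun i => S.V i j = true :=
  fun _ _ hki h => (lt_or_eq_of_le hki).elim (S.V_left _ j _ · h) (· ▸ h)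

theorem H_iff_lt_hcode (i j : ℕ) : S.H i j = true ↔ j < hcode m n S (i + 1) := by
  rw [hcode, Nat.add_sub_cancel, Nat.lt_card_filter_range_iff (S.antitone_H i)]
  exact ⟨fun h => ⟨Nat.lt_succ_of_le (S.H_bound i j h).2, h⟩, And.right⟩

theorem V_iff_lt_vcode (i j : ℕ) : S.V i j = true ↔ i < vcode m n S (j + 1) := by
  rw [vcode, Nat.add_sub_cancel, Nat.lt_card_filter_range_iff (S.antitone_V j)]
  exact ⟨fun h => ⟨Nat.lt_succ_of_le (S.V_bound i j h).1, h⟩, And.right⟩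

theorem hcode_le (i : ℕ) : hcode m n S i ≤ n + 1 :=
  (card_filter_le _ _).trans (card_range _).le

theorem vcode_le (j : ℕ) : vcode m n S j ≤ m + 1 :=
  (card_filter_le _ _).trans (card_range _).le

theorem vcode_hcode_le (i : ℕ) (h : 0 < hcode m n S (i + 1)) :
    vcode m n S (hcode m n S (i + 1)) ≤ i + 1 := by
  obtain ⟨c, hc⟩ := Nat.exists_eq_add_one_of_ne_zero h.ne'
  rw [hc, ← not_lt, ← V_iff_lt_vcode]
  intro hV
  have hH : S.H i c = true := (S.H_iff_lt_hcode i c).2 (by omega)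
  have hH' := S.sq₃ i c hH (S.V_left _ c i (Nat.lt_succ_self i) hV) hV
  exact absurd ((S.H_iff_lt_hcode i (c + 1)).1 hH') (by omega)

theorem hcode_vcode_le (j : ℕ) (h : 0 < vcode m n S (j + 1)) :
    hcode m n S (vcode m n S (j + 1)) ≤ j + 1 := by
  obtain ⟨d, hd⟩ := Nat.exists_eq_add_one_of_ne_zero h.ne'
  rw [hd, ← not_lt, ← H_iff_lt_hcode]
  intro hH
  have hV : S.V d j = true := (S.V_iff_lt_vcode d j).2 (by omega)
  have hV' := S.sq₁ d j (S.H_down d _ j (Nat.lt_succ_self j) hH) hH hV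
  exact absurd ((S.V_iff_lt_vcode (d + 1) j).1 hV') (by omega)

def codes : CompCodes m n where
  a i := if 1 ≤ i ∧ i ≤ m then hcode m n S i else 0
  b j := if 1 ≤ j ∧ j ≤ n then vcode m n S j else 0
  a_supp i hi := if_neg (by omega)
  b_supp j hj := if_neg (by omega)
  a_le i h₁ h₂ := by rw [if_pos ⟨h₁, h₂⟩]; exact S.hcode_le i
  b_le j h₁ h₂ := by rw [if_pos ⟨h₁, h₂⟩]; exact S.vcode_le j
  compat_a i h₁ h₂ ha₁ ha₂ := by
    obtain ⟨i, rfl⟩ := Nat.exists_eq_add_of_le' h₁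
    simp only [if_pos (And.intro h₁ h₂)] at ha₁ ha₂ ⊢
    rw [if_pos ⟨ha₁, ha₂⟩]
    exact S.vcode_hcode_le i ha₁
  compat_b j h₁ h₂ hb₁ hb₂ := by
    obtain ⟨j, rfl⟩ := Nat.exists_eq_add_of_le' h₁
    simp only [if_pos (And.intro h₁ h₂)] at hb₁ hb₂ ⊢
    rw [if_pos ⟨hb₁, hb₂⟩]
    exact S.hcode_vcode_le j hb₁

theorem codes_a (i : ℕ) : S.codes.a i = if 1 ≤ i ∧ i ≤ m then hcode m n S i else 0 := rfl

theorem codes_b (j : ℕ) : S.codes.b j = if 1 ≤ j ∧ j ≤ n then vcode m n S j else 0 := rfl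

theorem H_iff_lt_codes_a (i j : ℕ) : S.H i j = true ↔ j < S.codes.a (i + 1) := by
  by_cases hi : i < m
  · rw [codes_a, if_pos ⟨by omega, hi⟩, H_iff_lt_hcode]
  · rw [codes_a, if_neg (by omega)]
    exact ⟨fun h => absurd (S.H_bound i j h).1 hi, fun h => absurd h (Nat.not_lt_zero j)⟩

theorem V_iff_lt_codes_b (i j : ℕ) : S.V i j = true ↔ i < S.codes.b (j + 1) := by
  by_cases hj : j < n
  · rw [codes_b, if_pos ⟨by omega, hj⟩, V_iff_lt_vcode]
  · rw [codes_b, if_neg (by omega)]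
    exact ⟨fun h => absurd (S.V_bound i j h).2 hj, fun h => absurd h (Nat.not_lt_zero i)⟩

end SatCover

namespace CompCodes

variable {m n : ℕ} (C : CompCodes m n)

@[ext]
theorem ext {C D : CompCodes m n} (ha : ∀ i, C.a i = D.a i) (hb : ∀ j, C.b j = D.b j) :
    C = D := by
  cases C; cases D; simp only [mk.injEq]; exact ⟨funext ha, funext hb⟩

theorem bound_of_lt_a_succ {i j : ℕ} (h : j < C.a (i + 1)) : i < m ∧ j ≤ n := by
  have hi : i < m := by
    by_contra hi
    rw [C.a_supp (i + 1) (Or.inr (by omega))] at h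
    omega
  exact ⟨hi, Nat.lt_succ_iff.1 (h.trans_le (C.a_le (i + 1) (by omega) (by omega)))⟩

theorem bound_of_lt_b_succ {i j : ℕ} (h : i < C.b (j + 1)) : i ≤ m ∧ j < n := by
  have hj : j < n := by
    by_contra hj
    rw [C.b_supp (j + 1) (Or.inr (by omega))] at h
    omega
  exact ⟨Nat.lt_succ_iff.1 (h.trans_le (C.b_le (j + 1) (by omega) (by omega))), hj⟩

def cover : SatCover m n where
  H i j := decide (j < C.a (i + 1))
  V i j := decide (i < C.b (j + 1))
  H_bound i j h := C.bound_of_lt_a_succ (of_decide_eq_true h)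
  V_bound i j h := C.bound_of_lt_b_succ (of_decide_eq_true h)
  H_down i j k hkj h := decide_eq_true (hkj.trans (of_decide_eq_true h))
  V_left i j k hki h := decide_eq_true (hki.trans (of_decide_eq_true h))
  sq₁ i j _ hH hV := by
    simp only [decide_eq_true_eq] at hH hV ⊢
    have hi := (C.bound_of_lt_a_succ hH).1
    have hj := (C.bound_of_lt_b_succ hV).2
    by_contra hb
    have := C.compat_b (j + 1) (by omega) (by omega) (by omega) (by omega)
    rw [show C.b (j + 1) = i + 1 by omega] at this
    omega
  sq₂ i j _ _ hV := decide_eq_true ((Nat.lt_succ_self i).trans (of_decide_eq_true hV))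
  sq₃ i j hH _ hV := by
    simp only [decide_eq_true_eq] at hH hV ⊢
    have hi := (C.bound_of_lt_a_succ hH).1
    have hj := (C.bound_of_lt_b_succ hV).2
    by_contra ha
    have := C.compat_a (i + 1) (by omega) (by omega) (by omega) (by omega)
    rw [show C.a (i + 1) = j + 1 by omega] at this
    omega
  sq₄ i j hH _ _ := decide_eq_true ((Nat.lt_succ_self j).trans (of_decide_eq_true hH))

theorem hcode_cover (i : ℕ) : hcode m n C.cover (i + 1) = C.a (i + 1) :=
  eq_of_forall_lt_iff fun j => (C.cover.H_iff_lt_hcode i j).symm.trans decide_eq_true_iff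

theorem vcode_cover (j : ℕ) : vcode m n C.cover (j + 1) = C.b (j + 1) :=
  eq_of_forall_lt_iff fun i => (C.cover.V_iff_lt_vcode i j).symm.trans decide_eq_true_iff

end CompCodes

theorem SatCover.cover_codes {m n : ℕ} (S : SatCover m n) : S.codes.cover = S := by
  ext i j
  · exact Bool.eq_iff_iff.2 (decide_eq_true_iff.trans (S.H_iff_lt_codes_a i j).symm)
  · exact Bool.eq_iff_iff.2 (decide_eq_true_iff.trans (S.V_iff_lt_codes_b i j).symm)

theorem CompCodes.codes_cover {m n : ℕ} (C : CompCodes m n) : C.cover.codes = C := by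
  ext k
  · rw [SatCover.codes_a]
    split_ifs with hk
    · obtain ⟨i, rfl⟩ := Nat.exists_eq_add_of_le' hk.1
      exact C.hcode_cover i
    · exact (C.a_supp k (by omega)).symm
  · rw [SatCover.codes_b]
    split_ifs with hk
    · obtain ⟨j, rfl⟩ := Nat.exists_eq_add_of_le' hk.1
      exact C.vcode_cover j
    · exact (C.b_supp k (by omega)).symm

def SatCover.equivCompCodes (m n : ℕ) : SatCover m n ≃ CompCodes m n where
  toFun := SatCover.codes
  invFun := CompCodes.cover
  left_inv := SatCover.cover_codes
  right_inv := CompCodes.codes_cover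

theorem stmt_6 (m n : ℕ) :
    ∃ e : SatCover m n ≃ CompCodes m n,
      ∀ S : SatCover m n,
        (∀ i, 1 ≤ i → i ≤ m → (e S).a i = hcode m n S i) ∧
        (∀ j, 1 ≤ j → j ≤ n → (e S).b j = vcode m n S j) :=
  ⟨SatCover.equivCompCodes m n, fun _ =>
    ⟨fun _ h₁ h₂ => if_pos ⟨h₁, h₂⟩, fun _ h₁ h₂ => if_pos ⟨h₁, h₂⟩⟩⟩
end
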